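/- arXiv:2308.08237 — 9 statements merged into one kernel-verified Lean document; each statement's English description precedes it below -/
import Mathlib

section
/- Let T be a tree, let v be a pendant vertex of T with unique neighbour q, and let u be a vertex of T distinct from v and q. Then for every 2-element subset {i,j} of the vertex set, Max4PC_T({u,v},{i,j}) = Max4PC_T({u,q},{i,j}) + 1; that is, the row of Max4PC_T indexed by {u,v} equals the row indexed by {u,q} plus the all-ones vector. -/
open SimpleGraph

variable {V : Type*}

/-- The maximum of the three four-point sums for vertices `w, x, y, z`:
`max (d w x + d y z) (max (d w y + d x z) (d w z + d x y))`.
This is the entry of the matrix `Max4PC` in row `{w,x}` and column `{y,z}`. -/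
noncomputable def max4 (G : SimpleGraph V) (w x y z : V) : ℕ :=
  max (G.dist w x + G.dist y z) (max (G.dist w y + G.dist x z) (G.dist w z + G.dist x y))

/-- If `v` is a pendant vertex of a connected graph with unique neighbour `q`, then
for every vertex `x ≠ v`, `dist x v = dist x q + 1`. -/
lemma dist_leaf' {V : Type*} (G : SimpleGraph V) (hc : G.Connected) (v q : V) (hvq : G.Adj v q)
    (hq : ∀ w, G.Adj v w → w = q) (x : V) (hx : x ≠ v) :
    G.dist x v = G.dist x q + 1 := by
  have h1 : G.dist q v = 1 := dist_eq_one_iff_adj.mpr hvq.symm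
  have c1 : G.dist x v = G.dist v x := dist_comm
  have c2 : G.dist x q = G.dist q x := dist_comm
  apply le_antisymm
  · calc G.dist x v ≤ G.dist x q + G.dist q v := hc.dist_triangle
      _ = G.dist x q + 1 := by rw [h1]
  · obtain ⟨p, hp⟩ := (hc v x).exists_walk_length_eq_dist
    cases p with
    | nil => exact absurd rfl hx.symm
    | cons h p' =>
      rename_i w
      have hw : w = q := hq w h
      subst hw
      have h2 : G.dist w x ≤ p'.length := SimpleGraph.dist_le p'
      simp only [SimpleGraph.Walk.length_cons] at hp
      omega

/-- If `v` is a pendant vertex of a tree `T` with unique neighbour `q`, and `u` is a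
vertex distinct from `v` and `q`, then for every pair of distinct vertices `{i,j}`,
`Max4PC_T({u,v},{i,j}) = Max4PC_T({u,q},{i,j}) + 1`. -/
theorem max4_row_leaf {V : Type*} [Fintype V] [DecidableEq V] (G : SimpleGraph V)
    [DecidableRel G.Adj] (hT : G.IsTree) (v q u : V)
    (hv : G.degree v = 1) (hvq : G.Adj v q) (huv : u ≠ v) (huq : u ≠ q)
    (i j : V) (hij : i ≠ j) :
    max4 G u v i j = max4 G u q i j + 1 := by
  have hc : G.Connected := hT.isConnected
  have hq : ∀ w, G.Adj v w → w = q := by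
    intro w hw
    have hcard : (G.neighborFinset v).card ≤ 1 := le_of_eq hv
    exact Finset.card_le_one.mp hcard w ((G.mem_neighborFinset v w).mpr hw)
      q ((G.mem_neighborFinset v q).mpr hvq)
  have key : ∀ x : V, x ≠ v → G.dist x v = G.dist x q + 1 :=
    dist_leaf' G hc v q hvq hq
  have duv : G.dist u v = G.dist u q + 1 := key u huv
  have dqv : G.dist q v = 1 := dist_eq_one_iff_adj.mpr hvq.symm
  have dvv : G.dist v v = 0 := SimpleGraph.dist_self (G := G)
  by_cases hi : i = v
  · rw [hi]
    have hjv : j ≠ v := hi ▸ hij.symm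
    have hvj : G.dist v j = G.dist q j + 1 := by
      have := key j hjv
      have c1 : G.dist v j = G.dist j v := dist_comm
      have c2 : G.dist q j = G.dist j q := dist_comm
      omega
    have tri : G.dist u j ≤ G.dist u q + G.dist q j := hc.dist_triangle
    simp only [max4]
    omega
  · by_cases hj : j = v
    · rw [hj]
      have hvi : G.dist v i = G.dist q i + 1 := by
        have := key i hi
        have c1 : G.dist v i = G.dist i v := dist_comm
        have c2 : G.dist q i = G.dist i q := dist_comm
        omega
      have hiv : G.dist i v = G.dist i q + 1 := key i hi
      have ciq : G.dist i q = G.dist q i := dist_comm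
      have tri : G.dist u i ≤ G.dist u q + G.dist q i := hc.dist_triangle
      simp only [max4]
      omega
    · have hvi : G.dist v i = G.dist q i + 1 := by
        have := key i hi
        have c1 : G.dist v i = G.dist i v := dist_comm
        have c2 : G.dist q i = G.dist i q := dist_comm
        omega
      have hvj : G.dist v j = G.dist q j + 1 := by
        have := key j hj
        have c1 : G.dist v j = G.dist j v := dist_comm
        have c2 : G.dist q j = G.dist j q := dist_comm
        omega
      simp only [max4]
      omega
end

section
/- Let T be a tree, let p be a pendant vertex of T with unique neighbour q, and let u be a neighbour of q other than p. Let B_u be the connected component of T − q containing u. Then for every 2-element subset {i,j} of the vertex set with both i and j in B_u, Max4PC_T({p,q},{i,j}) = Max4PC_T({u,q},{i,j}) + 2. -/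
open SimpleGraph

variable {V : Type*}

/-!
Proof idea: a path from `u` to a vertex `x` of `B_u` avoids `q`, so prefixing the edge `qu`,
and then also `pq`, still gives a path; in a tree paths are geodesics, hence
`d(q,x) = d(u,x) + 1` and `d(p,x) = d(u,x) + 2` on `B_u`. Both `Max4PC` entries are then attained
by the sum `d(·,i) + d(q,j)`, because `d(i,j) ≤ d(u,i) + d(u,j)`, and the two sums differ by `2`.
-/

namespace SimpleGraph

variable {G : SimpleGraph V}

theorem Reachable.exists_isPath_support_subset_of_induce {s : Set V} {a b : V} {ha : a ∈ s}
    {hb : b ∈ s} (h : (G.induce s).Reachable ⟨a, ha⟩ ⟨b, hb⟩) :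
    ∃ P : G.Walk a b, P.IsPath ∧ ∀ v ∈ P.support, v ∈ s := by
  classical
  obtain ⟨W⟩ := h
  refine ⟨W.bypass.map (Embedding.induce s).toHom,
    W.bypass_isPath.map Subtype.val_injective, ?_⟩
  intro v hv
  change v ∈ (W.bypass.map (Embedding.induce s).toHom).support at hv
  rw [Walk.support_map] at hv
  obtain ⟨v, -, rfl⟩ := List.mem_map.mp hv
  exact v.2

theorem IsAcyclic.length_eq_dist (hG : G.IsAcyclic) {a b : V} {P : G.Walk a b}
    (hP : P.IsPath) : P.length = G.dist a b := by
  obtain ⟨Q, hQ, hQlen⟩ := P.reachable.exists_path_of_dist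
  rw [← hQlen]
  exact congrArg (·.1.length) ((hG.subsingleton_path a b).elim ⟨P, hP⟩ ⟨Q, hQ⟩)

theorem IsAcyclic.dist_eq_dist_add_one_of_isPath (hG : G.IsAcyclic) {q b x : V} (hqb : G.Adj q b)
    {P : G.Walk b x} (hP : P.IsPath) (hq : q ∉ P.support) : G.dist q x = G.dist b x + 1 := by
  rw [← hG.length_eq_dist hP, ← hG.length_eq_dist (hP.cons hq (h := hqb)), Walk.length_cons]

/-- Two distinct neighbours `a`, `b` of `q` lie in different components of `G - q`. -/
theorem IsAcyclic.notMem_support_of_isPath (hG : G.IsAcyclic) {q a b x : V} (hqa : G.Adj q a)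
    (hqb : G.Adj q b) (hab : a ≠ b) {P : G.Walk b x} (hP : P.IsPath) (hq : q ∉ P.support) :
    a ∉ P.support := by
  classical
  intro ha
  have hq' : q ∉ (P.takeUntil a ha).support :=
    fun h => hq (P.support_takeUntil_subset_support ha h)
  have h := hG.dist_eq_dist_add_one_of_isPath hqb (hP.takeUntil ha) hq'
  rw [dist_eq_one_iff_adj.mpr hqa] at h
  have hba : G.dist b a = 0 := by omega
  exact hab ((Reachable.dist_eq_zero_iff (P.takeUntil a ha).reachable).mp hba).symm

theorem IsAcyclic.dist_eq_dist_add_two_of_isPath (hG : G.IsAcyclic) {q a b x : V}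
    (hqa : G.Adj q a) (hqb : G.Adj q b) (hab : a ≠ b) {P : G.Walk b x} (hP : P.IsPath)
    (hq : q ∉ P.support) : G.dist a x = G.dist b x + 2 := by
  have ha : a ∉ (Walk.cons hqb P).support := by
    simp only [Walk.support_cons, List.mem_cons, not_or]
    exact ⟨hqa.ne', hG.notMem_support_of_isPath hqa hqb hab hP hq⟩
  rw [hG.dist_eq_dist_add_one_of_isPath hqa.symm (hP.cons hq) ha,
    hG.dist_eq_dist_add_one_of_isPath hqb hP hq]

end SimpleGraph

theorem max4_pendant_component_both_general {V : Type*}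
    (G : SimpleGraph V) (hT : G.IsTree) (p q u : V)
    (hpq : G.Adj p q) (huq : G.Adj u q) (hup : u ≠ p)
    (i j : V) (hi : i ≠ q) (hj : j ≠ q)
    (hiB : (SimpleGraph.induce {v : V | v ≠ q} G).Reachable ⟨i, hi⟩ ⟨u, huq.ne⟩)
    (hjB : (SimpleGraph.induce {v : V | v ≠ q} G).Reachable ⟨j, hj⟩ ⟨u, huq.ne⟩) :
    max4 G p q i j = max4 G u q i j + 2 := by
  have hA := hT.isAcyclic
  obtain ⟨Pi, hPi, hPi_q⟩ := hiB.symm.exists_isPath_support_subset_of_induce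
  obtain ⟨Pj, hPj, hPj_q⟩ := hjB.symm.exists_isPath_support_subset_of_induce
  have hqPi : q ∉ Pi.support := fun h => hPi_q q h rfl
  have hqPj : q ∉ Pj.support := fun h => hPj_q q h rfl
  have hqi := hA.dist_eq_dist_add_one_of_isPath huq.symm hPi hqPi
  have hqj := hA.dist_eq_dist_add_one_of_isPath huq.symm hPj hqPj
  have hpi := hA.dist_eq_dist_add_two_of_isPath hpq.symm huq.symm hup.symm hPi hqPi
  have hpj := hA.dist_eq_dist_add_two_of_isPath hpq.symm huq.symm hup.symm hPj hqPj
  have htri : G.dist i j ≤ G.dist u i + G.dist u j :=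
    dist_comm (u := u) ▸ hT.connected.dist_triangle
  unfold max4
  rw [dist_eq_one_iff_adj.mpr hpq, dist_eq_one_iff_adj.mpr huq, hqi, hqj, hpi, hpj]
  omega

/-- Let `p` be a pendant vertex of a tree with unique neighbour `q`, and let `u` be a
neighbour of `q` other than `p`.  If `i` and `j` both lie in the connected component
`B_u` of `T - q` containing `u`, then
`Max4PC_T({p,q},{i,j}) = Max4PC_T({u,q},{i,j}) + 2`. -/
theorem max4_pendant_component_both {V : Type*} [Fintype V] [DecidableEq V]
    (G : SimpleGraph V) [DecidableRel G.Adj] (hT : G.IsTree) (p q u : V)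
    (hp : G.degree p = 1) (hpq : G.Adj p q) (huq : G.Adj u q) (hup : u ≠ p)
    (i j : V) (hij : i ≠ j) (hi : i ≠ q) (hj : j ≠ q)
    (hiB : (SimpleGraph.induce {v : V | v ≠ q} G).Reachable ⟨i, hi⟩ ⟨u, huq.ne⟩)
    (hjB : (SimpleGraph.induce {v : V | v ≠ q} G).Reachable ⟨j, hj⟩ ⟨u, huq.ne⟩) :
    max4 G p q i j = max4 G u q i j + 2 :=
  max4_pendant_component_both_general G hT p q u hpq huq hup i j hi hj hiB hjB
end

section
/- Let T be a tree, let p be a pendant vertex of T with unique neighbour q, and let u be a neighbour of q other than p. Let B_u be the connected component of T − q containing u. Then for every 2-element subset {i,j} of the vertex set such that not both i and j lie in B_u, Max4PC_T({p,q},{i,j}) = Max4PC_T({u,q},{i,j}). -/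
open SimpleGraph

variable {V : Type*}

private lemma reach_induce {V : Type*} {G : SimpleGraph V} {q : V} :
    ∀ {a b : V} (W : G.Walk a b), q ∉ W.support →
      ∀ (ha : a ≠ q) (hb : b ≠ q),
      (SimpleGraph.induce {v : V | v ≠ q} G).Reachable ⟨a, ha⟩ ⟨b, hb⟩
  | _, _, SimpleGraph.Walk.nil, _, _, _ => Reachable.refl _
  | _, _, SimpleGraph.Walk.cons h W, hW, ha, hb => by
    rw [SimpleGraph.Walk.support_cons, List.mem_cons] at hW
    push_neg at hW
    have hc : _ ≠ q := fun hcq => hW.2 (hcq ▸ W.start_mem_support)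
    exact Reachable.trans (SimpleGraph.Adj.reachable (by simpa using h))
      (reach_induce W hW.2 hc hb)

private lemma dist_split {V : Type*} [DecidableEq V] {G : SimpleGraph V} (hc : G.Connected) {x v q : V}
    (h : ∀ W : G.Walk x v, q ∈ W.support) :
    G.dist x v = G.dist x q + G.dist q v := by
  refine le_antisymm hc.dist_triangle ?_
  obtain ⟨W, hW⟩ := (hc x v).exists_walk_length_eq_dist
  have hq := h W
  have hlen : (W.takeUntil q hq).length + (W.dropUntil q hq).length = W.length := by
    rw [← SimpleGraph.Walk.length_append, SimpleGraph.Walk.take_spec]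
  calc G.dist x q + G.dist q v
      ≤ (W.takeUntil q hq).length + (W.dropUntil q hq).length :=
        add_le_add (SimpleGraph.dist_le _) (SimpleGraph.dist_le _)
    _ = G.dist x v := by rw [hlen, hW]

private lemma no_reach {W : Type*} {H : SimpleGraph W} {x y : W}
    (hx : ∀ z, ¬ H.Adj x z) (hxy : x ≠ y) : ¬ H.Reachable x y := by
  intro h
  obtain ⟨P⟩ := h
  cases P with
  | nil => exact hxy rfl
  | cons h _ => exact hx _ h

private lemma max4_aux {V : Type*} [DecidableEq V] (G : SimpleGraph V) (hc : G.Connected) (p q u : V)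
    (honly : ∀ x, G.Adj p x → x = q) (hpq : G.Adj p q) (huq : G.Adj u q) (hup : u ≠ p)
    (i j : V) (hij : i ≠ j)
    (hBj : ¬ (∃ hj : j ≠ q,
        (SimpleGraph.induce {v : V | v ≠ q} G).Reachable ⟨j, hj⟩ ⟨u, huq.ne⟩)) :
    max4 G p q i j = max4 G u q i j := by
  have hdpq : G.dist p q = 1 := SimpleGraph.dist_eq_one_iff_adj.mpr hpq
  have hdqp : G.dist q p = 1 := SimpleGraph.dist_eq_one_iff_adj.mpr hpq.symm
  have hduq : G.dist u q = 1 := SimpleGraph.dist_eq_one_iff_adj.mpr huq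
  -- every walk from p to v ≠ p passes through q
  have hL1 : ∀ v : V, v ≠ p → G.dist p v = 1 + G.dist q v := by
    intro v hv
    have hthru : ∀ W : G.Walk p v, q ∈ W.support := by
      intro W
      cases W with
      | nil => exact absurd rfl hv.symm
      | cons h W =>
        have := honly _ h
        subst this
        rw [SimpleGraph.Walk.support_cons]
        exact List.mem_cons_of_mem _ W.start_mem_support
    rw [dist_split hc hthru, hdpq]
  -- p is not in the component of u
  have hBp : ¬ (∃ hp : p ≠ q,
      (SimpleGraph.induce {v : V | v ≠ q} G).Reachable ⟨p, hp⟩ ⟨u, huq.ne⟩) := by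
    rintro ⟨hpne, hre⟩
    refine no_reach (x := (⟨p, hpne⟩ : {v : V | v ≠ q})) ?_ ?_ hre
    · rintro ⟨z, hz⟩ hadj
      have : G.Adj p z := by simpa using hadj
      exact hz (honly z this)
    · intro h
      exact hup (congrArg Subtype.val h).symm
  -- if v is not in the component of u then d(u,v) = 1 + d(q,v)
  have hL2 : ∀ v : V, ¬ (∃ hv : v ≠ q,
      (SimpleGraph.induce {v : V | v ≠ q} G).Reachable ⟨v, hv⟩ ⟨u, huq.ne⟩) →
      G.dist u v = 1 + G.dist q v := by
    intro v hv
    by_cases hvq : v = q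
    · subst hvq; simp [hduq]
    · have hthru : ∀ W : G.Walk u v, q ∈ W.support := by
        intro W
        by_contra hqW
        exact hv ⟨hvq, (reach_induce W hqW huq.ne hvq).symm⟩
      rw [dist_split hc hthru, hduq]
  have hduj : G.dist u j = 1 + G.dist q j := hL2 j hBj
  have htri : G.dist u i ≤ 1 + G.dist q i := by
    have := hc.dist_triangle (u := u) (v := q) (w := i)
    omega
  have hdup : G.dist u p = 2 := by rw [hL2 p hBp, hdqp]
  by_cases hjp : j = p
  · have h1 : G.dist p i = 1 + G.dist q i := hL1 i (fun h => hij (h.trans hjp.symm))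
    have h2 : G.dist i j = G.dist p i := by rw [hjp, SimpleGraph.dist_comm]
    have h3 : G.dist p j = 0 := by rw [hjp]; exact SimpleGraph.dist_self
    have h4 : G.dist q j = 1 := by rw [hjp]; exact hdqp
    have h5 : G.dist u j = 2 := by rw [hjp]; exact hdup
    simp only [max4]
    omega
  · have hdpj : G.dist p j = 1 + G.dist q j := hL1 j hjp
    by_cases hip : i = p
    · have h3 : G.dist p i = 0 := by rw [hip]; exact SimpleGraph.dist_self
      have h4 : G.dist q i = 1 := by rw [hip]; exact hdqp
      have h5 : G.dist u i = 2 := by rw [hip]; exact hdup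
      have h6 : G.dist i j = G.dist p j := by rw [hip]
      simp only [max4]
      omega
    · have hdpi : G.dist p i = 1 + G.dist q i := hL1 i hip
      by_cases hBi : ∃ hi : i ≠ q,
          (SimpleGraph.induce {v : V | v ≠ q} G).Reachable ⟨i, hi⟩ ⟨u, huq.ne⟩
      · simp only [max4]
        omega
      · have hdui : G.dist u i = 1 + G.dist q i := hL2 i hBi
        simp only [max4]
        omega

/-- Let `p` be a pendant vertex of a tree with unique neighbour `q`, and let `u` be a
neighbour of `q` other than `p`.  If not both `i` and `j` lie in the connected
component `B_u` of `T - q` containing `u`, then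
`Max4PC_T({p,q},{i,j}) = Max4PC_T({u,q},{i,j})`. -/
theorem max4_pendant_component_not_both {V : Type*} [Fintype V] [DecidableEq V]
    (G : SimpleGraph V) [DecidableRel G.Adj] (hT : G.IsTree) (p q u : V)
    (hp : G.degree p = 1) (hpq : G.Adj p q) (huq : G.Adj u q) (hup : u ≠ p)
    (i j : V) (hij : i ≠ j)
    (hnot : ¬ ((∃ hi : i ≠ q,
        (SimpleGraph.induce {v : V | v ≠ q} G).Reachable ⟨i, hi⟩ ⟨u, huq.ne⟩) ∧
      (∃ hj : j ≠ q,
        (SimpleGraph.induce {v : V | v ≠ q} G).Reachable ⟨j, hj⟩ ⟨u, huq.ne⟩))) :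
    max4 G p q i j = max4 G u q i j := by
  have hc : G.Connected := hT.isConnected
  have honly : ∀ x, G.Adj p x → x = q := by
    intro x hx
    obtain ⟨a, ha⟩ := Finset.card_eq_one.mp ((G.card_neighborFinset_eq_degree p).trans hp)
    have h1 : q ∈ G.neighborFinset p := by simpa using hpq
    have h2 : x ∈ G.neighborFinset p := by simpa using hx
    rw [ha, Finset.mem_singleton] at h1 h2
    rw [h1, h2]
  have hsymm : ∀ w x y z : V, max4 G w x y z = max4 G w x z y := by
    intro w x y z
    have h1 : G.dist y z = G.dist z y := SimpleGraph.dist_comm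
    simp only [max4]
    omega
  rcases not_and_or.mp hnot with hBi | hBj
  · rw [hsymm p q i j, hsymm u q i j]
    exact max4_aux G hc p q u honly hpq huq hup j i (Ne.symm hij) hBi
  · exact max4_aux G hc p q u honly hpq huq hup i j hij hBj
end

section
/- Let T be a tree, let q be a vertex of T, and let l and l' be two distinct pendant vertices of T both adjacent to q. Then for every 2-element subset {i,j} of the vertex set, Max4PC_T({q,l},{i,j}) = Max4PC_T({q,l'},{i,j}); that is, the rows of Max4PC_T indexed by {q,l} and {q,l'} are equal. -/
open SimpleGraph

variable {V : Type*}

private lemma leaf_dist {V : Type*} [Fintype V] [DecidableEq V]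
    (G : SimpleGraph V) [DecidableRel G.Adj] (hc : G.Connected) {q l : V}
    (hl : G.degree l = 1) (hadj : G.Adj q l) {x : V} (hx : x ≠ l) :
    G.dist l x = G.dist q x + 1 := by
  have huniq : ∀ v, G.Adj l v → v = q := by
    intro v hv
    obtain ⟨a, ha⟩ := Finset.card_eq_one.mp hl
    have hq : q ∈ G.neighborFinset l := by simp [hadj.symm]
    have hv' : v ∈ G.neighborFinset l := by simp [hv]
    rw [ha, Finset.mem_singleton] at hq hv'
    rw [hv', hq]
  have hql : G.dist l q = 1 := by
    rw [SimpleGraph.dist_comm]; exact dist_eq_one_iff_adj.mpr hadj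
  obtain ⟨p, hp⟩ := (hc l x).exists_walk_length_eq_dist
  cases p with
  | nil => exact absurd rfl hx.symm
  | cons h p' =>
    rename_i b
    have hb : b = q := huniq b h
    have h1 : G.dist q x ≤ p'.length := by rw [← hb]; exact dist_le p'
    have h2 : G.dist l x ≤ G.dist l q + G.dist q x := hc.dist_triangle
    simp only [Walk.length_cons] at hp
    omega

/-- If `l` and `l'` are two distinct pendant vertices of a tree both adjacent to the
same vertex `q`, then the rows of `Max4PC_T` indexed by `{q,l}` and `{q,l'}` are
equal: for every pair of distinct vertices `{i,j}`,
`Max4PC_T({q,l},{i,j}) = Max4PC_T({q,l'},{i,j})`. -/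
theorem max4_rows_of_twin_leaves {V : Type*} [Fintype V] [DecidableEq V]
    (G : SimpleGraph V) [DecidableRel G.Adj] (hT : G.IsTree) (q l l' : V)
    (hl : G.degree l = 1) (hl' : G.degree l' = 1) (hll' : l ≠ l')
    (hadj : G.Adj q l) (hadj' : G.Adj q l') (i j : V) (hij : i ≠ j) :
    max4 G q l i j = max4 G q l' i j := by
  have hc := hT.isConnected
  have hdl : ∀ x : V, x ≠ l → G.dist l x = G.dist q x + 1 :=
    fun x hx => leaf_dist G hc hl hadj hx
  have hdl' : ∀ x : V, x ≠ l' → G.dist l' x = G.dist q x + 1 :=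
    fun x hx => leaf_dist G hc hl' hadj' hx
  have hql : G.dist q l = 1 := dist_eq_one_iff_adj.mpr hadj
  have hql' : G.dist q l' = 1 := dist_eq_one_iff_adj.mpr hadj'
  have hll2 : G.dist l l' = 2 := by rw [hdl l' hll'.symm, hql']
  have hll2' : G.dist l' l = 2 := by rw [SimpleGraph.dist_comm]; exact hll2
  unfold max4
  rcases eq_or_ne i l with h | hil
  · -- i = l
    have hC : G.dist q i = 1 := by rw [h]; exact hql
    have hF : G.dist l i = 0 := by rw [h]; exact SimpleGraph.dist_self
    have hF' : G.dist l' i = 2 := by rw [h]; exact hll2'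
    have hjl : j ≠ l := h ▸ hij.symm
    have hD : G.dist l j = G.dist q j + 1 := hdl j hjl
    have hB : G.dist i j = G.dist q j + 1 := by rw [h]; exact hD
    rcases eq_or_ne j l' with h2 | hjl'
    · have hD' : G.dist l' j = 0 := by rw [h2]; exact SimpleGraph.dist_self
      have hE : G.dist q j = 1 := by rw [h2]; exact hql'
      omega
    · have hD' : G.dist l' j = G.dist q j + 1 := hdl' j hjl'
      omega
  rcases eq_or_ne i l' with h | hil'
  · -- i = l'
    have hC : G.dist q i = 1 := by rw [h]; exact hql'
    have hF' : G.dist l' i = 0 := by rw [h]; exact SimpleGraph.dist_self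
    have hF : G.dist l i = 2 := by rw [h]; exact hll2
    have hjl' : j ≠ l' := h ▸ hij.symm
    have hD' : G.dist l' j = G.dist q j + 1 := hdl' j hjl'
    have hB : G.dist i j = G.dist q j + 1 := by rw [h]; exact hD'
    rcases eq_or_ne j l with h2 | hjl
    · have hD : G.dist l j = 0 := by rw [h2]; exact SimpleGraph.dist_self
      have hE : G.dist q j = 1 := by rw [h2]; exact hql
      omega
    · have hD : G.dist l j = G.dist q j + 1 := hdl j hjl
      omega
  rcases eq_or_ne j l with h | hjl
  · -- j = l
    have hE : G.dist q j = 1 := by rw [h]; exact hql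
    have hD : G.dist l j = 0 := by rw [h]; exact SimpleGraph.dist_self
    have hD' : G.dist l' j = 2 := by rw [h]; exact hll2'
    have hF : G.dist l i = G.dist q i + 1 := hdl i hil
    have hF' : G.dist l' i = G.dist q i + 1 := hdl' i hil'
    have hB : G.dist i j = G.dist q i + 1 := by
      rw [SimpleGraph.dist_comm, h]; exact hF
    omega
  rcases eq_or_ne j l' with h | hjl'
  · -- j = l'
    have hE : G.dist q j = 1 := by rw [h]; exact hql'
    have hD' : G.dist l' j = 0 := by rw [h]; exact SimpleGraph.dist_self
    have hD : G.dist l j = 2 := by rw [h]; exact hll2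
    have hF : G.dist l i = G.dist q i + 1 := hdl i hil
    have hF' : G.dist l' i = G.dist q i + 1 := hdl' i hil'
    have hB : G.dist i j = G.dist q i + 1 := by
      rw [SimpleGraph.dist_comm, h]; exact hF'
    omega
  · -- generic
    have hF : G.dist l i = G.dist q i + 1 := hdl i hil
    have hF' : G.dist l' i = G.dist q i + 1 := hdl' i hil'
    have hD : G.dist l j = G.dist q j + 1 := hdl j hjl
    have hD' : G.dist l' j = G.dist q j + 1 := hdl' j hjl'
    omega
end

section
/- Let T be a tree on n > 3 vertices, and suppose u and v are two distinct pendant vertices of T that are adjacent to the same vertex. Then the rank (over the rationals) of Max4PC_T equals the rank of Max4PC_{T−u}, and also equals the rank of Max4PC_{T−v}. -/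
open SimpleGraph

variable {V : Type*}

/-- The `Max4PC` entry as a symmetric function of two unordered pairs. -/
noncomputable def max4Sym2 (G : SimpleGraph V) : Sym2 V → Sym2 V → ℕ :=
  Sym2.lift₂ ⟨fun w x y z => max4 G w x y z, by
    intro a₁ a₂ b₁ b₂
    simp only [max4]
    constructor
    · rw [show G.dist a₂ a₁ = G.dist a₁ a₂ from G.dist_comm]
      omega
    · rw [show G.dist b₂ b₁ = G.dist b₁ b₂ from G.dist_comm]
      omega⟩

/-- The matrix `Max4PC_T`, with rows and columns indexed by the 2-element
subsets of the vertex set (non-diagonal elements of `Sym2 V`), over `ℚ`. -/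
noncomputable def max4Matrix [Fintype V] [DecidableEq V] (G : SimpleGraph V) :
    Matrix {s : Sym2 V // ¬ s.IsDiag} {s : Sym2 V // ¬ s.IsDiag} ℚ :=
  fun p q => (max4Sym2 G p.1 q.1 : ℚ)

/-!
If `u` is a leaf with neighbour `w`, then `d(u, t) = d(w, t) + 1` for every `t ≠ u`, so
`max4 u x y z = max4 w x y z + 1` whenever `x ≠ u` and `y ≠ z`; hence the `Max4PC` row `{u, x}` is the row `{w, x}` plus the all-ones vector. For a twin leaf `v` of `u`
and a fourth vertex `x₀`, the all-ones vector is the difference of the rows `{v, x₀}` and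
`{w, x₀}`, and the row `{u, w}` equals the row `{v, w}`. So all rows through `u` lie in the span
of the rows avoiding `u`. As the matrix is symmetric and deleting a leaf preserves distances,
`Max4PC_{T-u}` is a principal submatrix of the same rank.
-/

namespace Matrix

variable {m m₀ n K : Type*} [Field K]

theorem rank_submatrix_id_eq_of_mem_span [Finite m] [Finite m₀] [Fintype n]
    (A : Matrix m n K) (e : m₀ → m) (h : ∀ i, A i ∈ Submodule.span K (Set.range (A ∘ e))) :
    (A.submatrix e id).rank = A.rank := by
  have hspan : Submodule.span K (Set.range (A.submatrix e id).row)
      = Submodule.span K (Set.range A.row) := by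
    refine le_antisymm (Submodule.span_mono ?_) (Submodule.span_le.2 ?_)
    · rintro _ ⟨i, rfl⟩
      exact ⟨e i, rfl⟩
    · rintro _ ⟨i, rfl⟩
      exact h i
  rw [rank_eq_finrank_span_row, rank_eq_finrank_span_row, hspan]

theorem IsSymm.rank_submatrix_eq_of_mem_span [Fintype m] [Fintype m₀] {A : Matrix m m K}
    (hA : A.IsSymm) (e : m₀ → m) (h : ∀ i, A i ∈ Submodule.span K (Set.range (A ∘ e))) :
    (A.submatrix e e).rank = A.rank := by
  have hcols : ∀ i, A.submatrix id e i ∈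
      Submodule.span K (Set.range (A.submatrix id e ∘ e)) := by
    intro i
    have := Submodule.mem_map_of_mem (f := LinearMap.funLeft K K e) (h i)
    rwa [Submodule.map_span, ← Set.range_comp] at this
  calc (A.submatrix e e).rank = ((A.submatrix id e).submatrix e id).rank := rfl
    _ = (A.submatrix id e).rank := rank_submatrix_id_eq_of_mem_span _ e hcols
    _ = (A.submatrix e id)ᵀ.rank := by rw [transpose_submatrix, hA.eq]
    _ = A.rank := by rw [rank_transpose, rank_submatrix_id_eq_of_mem_span A e h]

end Matrix

namespace SimpleGraph

variable {G : SimpleGraph V}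

theorem Walk.dist_add_dist_le_of_mem_support {a b c : V} (p : G.Walk a b)
    (hp : p.length = G.dist a b) (hc : c ∈ p.support) :
    G.dist a c + G.dist c b ≤ G.dist a b := by
  obtain ⟨q, r, rfl⟩ := Walk.mem_support_iff_exists_append.mp hc
  rw [Walk.length_append] at hp
  have := G.dist_le q
  have := G.dist_le r
  omega

variable {u v w : V}

theorem Connected.dist_eq_dist_add_one_of_degree_eq_one [Fintype (G.neighborSet u)]
    (hc : G.Connected) (hu : G.degree u = 1) (huw : G.Adj u w) {x : V} (hx : x ≠ u) :
    G.dist u x = G.dist w x + 1 := by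
  have huw' : G.dist u w = 1 := dist_eq_one_iff_adj.2 huw
  obtain ⟨p, hp⟩ := hc.exists_walk_length_eq_dist u x
  have hnil : ¬p.Nil := Walk.not_nil_of_ne hx.symm
  have hsnd : p.snd = w := (degree_eq_one_iff_existsUnique_adj.1 hu).unique (p.adj_snd hnil) huw
  have hw : w ∈ p.support := hsnd ▸ p.getVert_mem_support 1
  have := p.dist_add_dist_le_of_mem_support hp hw
  have := hc.dist_triangle (u := u) (v := w) (w := x)
  omega

theorem Connected.dist_induce_of_degree_eq_one [Fintype (G.neighborSet u)]
    (hc : G.Connected) (hu : G.degree u = 1) (a b : {x : V | x ≠ u}) :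
    (G.induce {x : V | x ≠ u}).dist a b = G.dist a b := by
  obtain ⟨w, huw, -⟩ := degree_eq_one_iff_existsUnique_adj.1 hu
  obtain ⟨a, ha⟩ := a
  obtain ⟨b, hb⟩ := b
  obtain ⟨p, hp⟩ := hc.exists_walk_length_eq_dist a b
  have hp_avoid : ∀ x ∈ p.support, x ∈ {x : V | x ≠ u} := by
    intro x hx hxu
    rw [hxu] at hx
    have := p.dist_add_dist_le_of_mem_support hp hx
    have := hc.dist_eq_dist_add_one_of_degree_eq_one hu huw ha
    have := hc.dist_eq_dist_add_one_of_degree_eq_one hu huw hb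
    have := hc.dist_triangle (u := a) (v := w) (w := b)
    have := G.dist_comm (u := a) (v := u)
    have := G.dist_comm (u := a) (v := w)
    omega
  have hq := congrArg Walk.length (p.map_induce hp_avoid)
  rw [Walk.length_map] at hq
  refine le_antisymm ?_ ?_
  · calc _ ≤ (p.induce _ hp_avoid).length := dist_le _
      _ = G.dist a b := hq.trans hp
  · obtain ⟨q, hq'⟩ := (p.induce _ hp_avoid).reachable.exists_walk_length_eq_dist
    calc G.dist a b ≤ (q.map (Embedding.induce {x : V | x ≠ u}).toHom).length := G.dist_le _
      _ = _ := by rw [Walk.length_map, hq']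

theorem Connected.max4_eq_max4_add_one_of_degree_eq_one [Fintype (G.neighborSet u)]
    (hc : G.Connected) (hu : G.degree u = 1) (huw : G.Adj u w) {x y z : V} (hx : x ≠ u)
    (hyz : y ≠ z) : max4 G u x y z = max4 G w x y z + 1 := by
  have hd {t : V} (ht : t ≠ u) : G.dist u t = G.dist w t + 1 :=
    hc.dist_eq_dist_add_one_of_degree_eq_one hu huw ht
  have hwu : G.dist w u = 1 := dist_eq_one_iff_adj.2 huw.symm
  have hxz := hc.dist_triangle (u := x) (v := w) (w := z)
  have hxy := hc.dist_triangle (u := x) (v := w) (w := y)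
  have := G.dist_comm (u := x) (v := w)
  have := G.dist_comm (u := x) (v := u)
  unfold max4
  by_cases hy : y = u
  · subst hy
    have := hd hx
    have := hd hyz.symm
    simp only [dist_self]
    omega
  by_cases hz : z = u
  · subst hz
    have := hd hx
    have := hd hy
    simp only [dist_self]
    omega
  have := hd hx
  have := hd hy
  have := hd hz
  omega

end SimpleGraph

theorem max4_comm (G : SimpleGraph V) (a b c d : V) : max4 G a b c d = max4 G c d a b := by
  have := G.dist_comm (u := a) (v := c)
  have := G.dist_comm (u := b) (v := d)
  have := G.dist_comm (u := a) (v := d)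
  have := G.dist_comm (u := b) (v := c)
  unfold max4
  omega

/-- The row of `max4Matrix G` at `s(a, b)`, defined also for `a = b`. -/
noncomputable def max4Row (G : SimpleGraph V) (a b : V) : {s : Sym2 V // ¬ s.IsDiag} → ℚ :=
  fun q => max4Sym2 G s(a, b) q.1

theorem max4Row_comm (G : SimpleGraph V) (a b : V) : max4Row G a b = max4Row G b a := by
  unfold max4Row
  rw [Sym2.eq_swap]

theorem SimpleGraph.Connected.max4Row_eq_max4Row_add_one_of_degree_eq_one {G : SimpleGraph V}
    {u w : V} [Fintype (G.neighborSet u)] (hc : G.Connected) (hu : G.degree u = 1)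
    (huw : G.Adj u w) {x : V} (hx : x ≠ u) : max4Row G u x = max4Row G w x + 1 := by
  funext ⟨q, hq⟩
  induction q using Sym2.ind with | _ y z =>
  have hyz : y ≠ z := fun h => hq (Sym2.mk_isDiag_iff.2 h)
  change (max4 G u x y z : ℚ) = max4 G w x y z + 1
  exact_mod_cast hc.max4_eq_max4_add_one_of_degree_eq_one hu huw hx hyz

theorem max4Matrix_isSymm [Fintype V] [DecidableEq V] (G : SimpleGraph V) :
    (max4Matrix G).IsSymm := by
  ext ⟨p, hp⟩ ⟨q, hq⟩
  induction p using Sym2.ind with | _ a b =>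
  induction q using Sym2.ind with | _ c d =>
  exact congrArg (Nat.cast : ℕ → ℚ) (max4_comm G c d a b)

def Sym2.nondiagMap {α β : Type*} {f : α → β} (hf : Function.Injective f)
    (s : {s : Sym2 α // ¬ s.IsDiag}) : {s : Sym2 β // ¬ s.IsDiag} :=
  ⟨s.1.map f, (Sym2.isDiag_map hf).not.2 s.2⟩

theorem max4Matrix_eq_submatrix_of_isometry {W : Type*} [Fintype V] [DecidableEq V] [Fintype W]
    [DecidableEq W] (G : SimpleGraph V) (H : SimpleGraph W) {f : W → V}
    (hf : Function.Injective f) (hdist : ∀ a b, H.dist a b = G.dist (f a) (f b)) :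
    max4Matrix H = (max4Matrix G).submatrix (Sym2.nondiagMap hf) (Sym2.nondiagMap hf) := by
  ext ⟨p, hp⟩ ⟨q, hq⟩
  induction p using Sym2.ind with | _ a b =>
  induction q using Sym2.ind with | _ c d =>
  change (max4 H a b c d : ℚ) = max4 G (f a) (f b) (f c) (f d)
  simp only [max4, hdist]

theorem rank_max4Matrix_induce_eq_of_twin_leaves [Fintype V] [DecidableEq V]
    {G : SimpleGraph V} [DecidableRel G.Adj] (hc : G.Connected) (hn : 3 < Fintype.card V)
    {u v w : V} (huv : u ≠ v) (hu : G.degree u = 1) (hv : G.degree v = 1) (huw : G.Adj u w)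
    (hvw : G.Adj v w) :
    (max4Matrix (G.induce {x : V | x ≠ u})).rank = (max4Matrix G).rank := by
  have hinj : Function.Injective (Subtype.val : {x : V | x ≠ u} → V) := Subtype.val_injective
  rw [max4Matrix_eq_submatrix_of_isometry G _ hinj (hc.dist_induce_of_degree_eq_one hu),
    (max4Matrix_isSymm G).rank_submatrix_eq_of_mem_span]
  set S := Submodule.span ℚ (Set.range (max4Matrix G ∘ Sym2.nondiagMap hinj))
  have hS {a b : V} (ha : a ≠ u) (hb : b ≠ u) (hab : a ≠ b) : max4Row G a b ∈ S :=
    Submodule.subset_span ⟨⟨s(⟨a, ha⟩, ⟨b, hb⟩), by simpa using hab⟩, rfl⟩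
  obtain ⟨x₀, -, hx₀⟩ := Finset.exists_mem_notMem_of_card_lt_card
    ((Finset.card_le_three (a := u) (b := v) (c := w)).trans_lt
      (hn.trans_eq Finset.card_univ.symm))
  simp only [Finset.mem_insert, Finset.mem_singleton, not_or] at hx₀
  obtain ⟨hx₀u, hx₀v, hx₀w⟩ := hx₀
  have hwu : w ≠ u := huw.ne.symm
  have hwv : w ≠ v := hvw.ne.symm
  have hone : (1 : {s : Sym2 V // ¬ s.IsDiag} → ℚ) ∈ S := by
    have h := sub_mem (hS (Ne.symm huv) hx₀u (Ne.symm hx₀v)) (hS hwu hx₀u (Ne.symm hx₀w))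
    rwa [hc.max4Row_eq_max4Row_add_one_of_degree_eq_one hv hvw hx₀v, add_sub_cancel_left] at h
  have hrow_u {x : V} (hx : x ≠ u) : max4Row G u x ∈ S := by
    rw [hc.max4Row_eq_max4Row_add_one_of_degree_eq_one hu huw hx]
    by_cases hxw : x = w
    · subst hxw
      rw [← hc.max4Row_eq_max4Row_add_one_of_degree_eq_one hv hvw hwv]
      exact hS (Ne.symm huv) hx hvw.ne
    · exact add_mem (hS hwu hx (Ne.symm hxw)) hone
  rintro ⟨p, hp⟩
  induction p using Sym2.ind with | _ a b =>
  have hab : a ≠ b := fun h => hp (Sym2.mk_isDiag_iff.2 h)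
  change max4Row G a b ∈ S
  by_cases ha : a = u
  · subst ha
    exact hrow_u (Ne.symm hab)
  by_cases hb : b = u
  · subst hb
    rw [max4Row_comm]
    exact hrow_u ha
  exact hS ha hb hab

/-- If a tree `T` on more than `3` vertices has two distinct pendant vertices `u, v`
adjacent to the same vertex `w`, then the rank of `Max4PC_T` over `ℚ` equals the
rank of `Max4PC_{T-u}`, and also equals the rank of `Max4PC_{T-v}`. -/
theorem rank_max4Matrix_delete_twin_leaf {V : Type*} [Fintype V] [DecidableEq V]
    (G : SimpleGraph V) [DecidableRel G.Adj] (hT : G.IsTree)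
    (hn : 3 < Fintype.card V) (u v w : V) (huv : u ≠ v)
    (hu : G.degree u = 1) (hv : G.degree v = 1) (huw : G.Adj u w) (hvw : G.Adj v w) :
    (max4Matrix G).rank = (max4Matrix (SimpleGraph.induce {x : V | x ≠ u} G)).rank ∧
    (max4Matrix G).rank = (max4Matrix (SimpleGraph.induce {x : V | x ≠ v} G)).rank :=
  ⟨(rank_max4Matrix_induce_eq_of_twin_leaves hT.connected hn huv hu hv huw hvw).symm,
    (rank_max4Matrix_induce_eq_of_twin_leaves hT.connected hn huv.symm hv hu hvw huw).symm⟩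
end

section
/- Let S_n be the star tree on n ≥ 3 vertices. Then the rank of Max4PC_{S_n} (over the rationals) equals 2. -/
open SimpleGraph

variable {V : Type*}

/-!
In a star every path between two distinct vertices runs through the centre `c`, so
`d(u,v) = h u + h v` for `u ≠ v`, where `h = d(·, c)`, while `d(u,u) = 0 ≤ 2 h u`. Hence for
`w ≠ x`, `y ≠ z` all three four-point sums are bounded by `h w + h x + h y + h z`, which the
first one attains: the entry of `Max4PC` at `({w,x}, {y,z})` is `d(w,x) + d(y,z)`. A matrix
`(u p + u q)` has rank at most `2`, and exactly `2` as soon as `u` is not constant (the minor on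
two rows with `u p ≠ u q` is `-(u p - u q)²`); here `d` takes the value `1` on a
centre–leaf pair and `2` on a pair of leaves, and `n ≥ 3` provides two leaves.
-/

namespace Matrix

variable {ι K : Type*} [Fintype ι] [Field K]

theorem rank_of_fun_add_le_two (u v : ι → K) : (of fun i j => u i + v j).rank ≤ 2 := by
  have hfactor : (of fun i j => u i + v j) =
      of (fun i k => ![u i, 1] k) * of fun k j => ![1, v j] k := by
    ext i j
    simp [mul_apply, Fin.sum_univ_two]
  rw [hfactor]
  exact (rank_mul_le_left _ _).trans (rank_le_card_width _ |>.trans_eq (Fintype.card_fin 2))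

theorem two_le_rank_of_fun_add_self (u : ι → K) {i j : ι} (hij : u i ≠ u j) :
    2 ≤ (of fun i j => u i + u j).rank := by
  set A := (of fun i j => u i + u j).submatrix ![i, j] ![i, j]
  have hdet : A.det = -(u i - u j) ^ 2 := by
    rw [det_fin_two]
    simp only [A, submatrix_apply, of_apply, cons_val_zero, cons_val_one]
    ring
  have hA : A.rank = 2 := by
    rw [rank_of_det_ne_zero, Fintype.card_fin]
    rw [hdet]
    exact neg_ne_zero.mpr (pow_ne_zero 2 (sub_ne_zero.mpr hij))
  exact hA ▸ rank_submatrix_le _ _ _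

end Matrix

namespace SimpleGraph

noncomputable def sym2Dist (G : SimpleGraph V) : Sym2 V → ℕ :=
  Sym2.lift ⟨G.dist, fun _ _ => G.dist_comm⟩

@[simp]
theorem sym2Dist_mk (G : SimpleGraph V) (u v : V) : G.sym2Dist s(u, v) = G.dist u v := rfl

variable {G : SimpleGraph V} {c : V}

section ThroughCentre

variable (hc : ∀ u v, u ≠ v → G.dist u v = G.dist u c + G.dist c v)
include hc

theorem max4_eq_dist_add_dist {w x y z : V} (hwx : w ≠ x) (hyz : y ≠ z) :
    max4 G w x y z = G.dist w x + G.dist y z := by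
  have hle (u v : V) : G.dist u v ≤ G.dist u c + G.dist c v := by
    rcases eq_or_ne u v with rfl | huv
    · simp
    · exact (hc u v huv).le
  have := hle w y; have := hle x z; have := hle w z; have := hle x y
  simp only [max4, hc w x hwx, hc y z hyz, G.dist_comm (u := c)] at *
  omega

theorem max4Sym2_eq_sym2Dist_add {p q : Sym2 V} (hp : ¬ p.IsDiag) (hq : ¬ q.IsDiag) :
    max4Sym2 G p q = G.sym2Dist p + G.sym2Dist q := by
  induction p using Sym2.ind with | _ w x =>
  induction q using Sym2.ind with | _ y z =>
  exact max4_eq_dist_add_dist hc (by simpa using hp) (by simpa using hq)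

theorem max4Matrix_eq_sym2Dist_add [Fintype V] [DecidableEq V] :
    max4Matrix G = Matrix.of fun p q => (G.sym2Dist p.1 + G.sym2Dist q.1 : ℚ) := by
  ext p q
  simp [max4Matrix, max4Sym2_eq_sym2Dist_add hc p.2 q.2]

end ThroughCentre

def IsStar (G : SimpleGraph V) (c : V) : Prop :=
  ∀ x y : V, G.Adj x y ↔ x ≠ y ∧ (x = c ∨ y = c)

section Star

variable (hstar : G.IsStar c)
include hstar

theorem adj_centre_of_isStar {x : V} (hx : x ≠ c) : G.Adj x c :=
  (hstar x c).mpr ⟨hx, Or.inr rfl⟩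

theorem dist_eq_two_of_isStar {x y : V} (hxy : x ≠ y) (hx : x ≠ c) (hy : y ≠ c) :
    G.dist x y = 2 := by
  have hxc := adj_centre_of_isStar hstar hx
  have hcy := (adj_centre_of_isStar hstar hy).symm
  have hle : G.dist x y ≤ 2 := by simpa using G.dist_le (hxc.toWalk.append hcy.toWalk)
  have hpos : G.dist x y ≠ 0 := (hxc.reachable.trans hcy.reachable).pos_dist_of_ne hxy |>.ne'
  have hne1 : G.dist x y ≠ 1 := fun h => by
    simpa [hx, hy] using (hstar x y).mp (dist_eq_one_iff_adj.mp h)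
  omega

theorem dist_eq_dist_add_dist_of_isStar (u v : V) (huv : u ≠ v) :
    G.dist u v = G.dist u c + G.dist c v := by
  rcases eq_or_ne u c with rfl | hu
  · simp
  rcases eq_or_ne v c with rfl | hv
  · simp
  rw [dist_eq_two_of_isStar hstar huv hu hv,
    dist_eq_one_iff_adj.mpr (adj_centre_of_isStar hstar hu),
    dist_eq_one_iff_adj.mpr (adj_centre_of_isStar hstar hv).symm]

end Star

end SimpleGraph

/-- The star tree on `n ≥ 3` vertices: a graph in which `x` and `y` are adjacent
iff they are distinct and one of them is the central vertex `c`.  Its `Max4PC`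
matrix has rank `2` over `ℚ`. -/
theorem rank_max4Matrix_star {V : Type*} [Fintype V] [DecidableEq V]
    (G : SimpleGraph V) (c : V)
    (hstar : ∀ x y : V, G.Adj x y ↔ x ≠ y ∧ (x = c ∨ y = c))
    (hn : 3 ≤ Fintype.card V) :
    (max4Matrix G).rank = 2 := by
  obtain ⟨a, ha, b, hb, hab⟩ := Finset.one_lt_card.mp <| show 1 < (Finset.univ.erase c).card by
    rw [Finset.card_erase_of_mem (Finset.mem_univ c), Finset.card_univ]
    omega
  rw [Finset.mem_erase] at ha hb
  let leafCentre : {s : Sym2 V // ¬ s.IsDiag} := ⟨s(a, c), by simpa using ha.1⟩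
  let leafLeaf : {s : Sym2 V // ¬ s.IsDiag} := ⟨s(a, b), by simpa using hab⟩
  have hdist : (G.sym2Dist leafCentre.1 : ℚ) ≠ G.sym2Dist leafLeaf.1 := by
    simp only [leafCentre, leafLeaf, sym2Dist_mk,
      dist_eq_one_iff_adj.mpr (adj_centre_of_isStar hstar ha.1),
      dist_eq_two_of_isStar hstar hab ha.1 hb.1]
    norm_num
  rw [max4Matrix_eq_sym2Dist_add (dist_eq_dist_add_dist_of_isStar hstar)]
  exact le_antisymm (Matrix.rank_of_fun_add_le_two _ _)
    (Matrix.two_le_rank_of_fun_add_self _ hdist)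
end

section
/- Let S_n be the star tree on n ≥ 3 vertices with central vertex c. Let i be a leaf, and let j, k be two distinct leaves. Then the rows of Max4PC_{S_n} indexed by {c,i} and {j,k} are linearly independent over the rationals, and the 2×2 submatrix of Max4PC_{S_n} with rows and columns indexed by {c,i} and {j,k} has determinant −1. -/
open SimpleGraph

variable {V : Type*}

lemma star_dist_center {V : Type*} (G : SimpleGraph V) (c : V)
    (hstar : ∀ x y : V, G.Adj x y ↔ x ≠ y ∧ (x = c ∨ y = c))
    {x : V} (hx : x ≠ c) : G.dist c x = 1 := by
  rw [SimpleGraph.dist_eq_one_iff_adj, hstar]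
  exact ⟨fun h => hx h.symm, Or.inl rfl⟩

lemma star_dist_leaves {V : Type*} (G : SimpleGraph V) (c : V)
    (hstar : ∀ x y : V, G.Adj x y ↔ x ≠ y ∧ (x = c ∨ y = c))
    {x y : V} (hx : x ≠ c) (hy : y ≠ c) (hxy : x ≠ y) : G.dist x y = 2 := by
  have hxc : G.Adj x c := (hstar x c).mpr ⟨hx, Or.inr rfl⟩
  have hcy : G.Adj c y := (hstar c y).mpr ⟨fun h => hy h.symm, Or.inl rfl⟩
  have hle : G.dist x y ≤ 2 :=
    SimpleGraph.dist_le (SimpleGraph.Walk.cons hxc (SimpleGraph.Walk.cons hcy SimpleGraph.Walk.nil))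
  have hne1 : G.dist x y ≠ 1 := by
    intro h1
    rcases (hstar x y).mp (SimpleGraph.dist_eq_one_iff_adj.mp h1) with ⟨-, h | h⟩
    · exact hx h
    · exact hy h
  have hne0 : G.dist x y ≠ 0 := by
    have hr : G.Reachable x y := ⟨SimpleGraph.Walk.cons hxc (SimpleGraph.Walk.cons hcy SimpleGraph.Walk.nil)⟩
    intro h0
    exact hxy (hr.dist_eq_zero_iff.mp h0)
  omega

/-- In the star tree on `n ≥ 3` vertices with central vertex `c`, for a leaf `i` and
two distinct leaves `j, k`, the rows of `Max4PC` indexed by `{c,i}` and `{j,k}` are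
linearly independent over `ℚ`, and the `2 × 2` submatrix on rows and columns
`{c,i}, {j,k}` has determinant `-1`. -/
theorem star_two_rows_independent {V : Type*} [Fintype V] [DecidableEq V]
    (G : SimpleGraph V) (c : V)
    (hstar : ∀ x y : V, G.Adj x y ↔ x ≠ y ∧ (x = c ∨ y = c))
    (hn : 3 ≤ Fintype.card V)
    (i j k : V) (hi : i ≠ c) (hj : j ≠ c) (hk : k ≠ c) (hjk : j ≠ k) :
    LinearIndependent ℚ
      ![max4Matrix G ⟨s(c, i), fun h => hi.symm (Sym2.mk_isDiag_iff.mp h)⟩,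
        max4Matrix G ⟨s(j, k), fun h => hjk (Sym2.mk_isDiag_iff.mp h)⟩] ∧
    ((max4Matrix G).submatrix
        ![(⟨s(c, i), fun h => hi.symm (Sym2.mk_isDiag_iff.mp h)⟩ : {s : Sym2 V // ¬ s.IsDiag}),
          ⟨s(j, k), fun h => hjk (Sym2.mk_isDiag_iff.mp h)⟩]
        ![(⟨s(c, i), fun h => hi.symm (Sym2.mk_isDiag_iff.mp h)⟩ : {s : Sym2 V // ¬ s.IsDiag}),
          ⟨s(j, k), fun h => hjk (Sym2.mk_isDiag_iff.mp h)⟩]).det = -1 := by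
  set p : {s : Sym2 V // ¬ s.IsDiag} := ⟨s(c, i), fun h => hi.symm (Sym2.mk_isDiag_iff.mp h)⟩
  set q : {s : Sym2 V // ¬ s.IsDiag} := ⟨s(j, k), fun h => hjk (Sym2.mk_isDiag_iff.mp h)⟩
  have dci : G.dist c i = 1 := star_dist_center G c hstar hi
  have dcj : G.dist c j = 1 := star_dist_center G c hstar hj
  have dck : G.dist c k = 1 := star_dist_center G c hstar hk
  have dic : G.dist i c = 1 := by rw [G.dist_comm]; exact dci
  have djk : G.dist j k = 2 := star_dist_leaves G c hstar hj hk hjk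
  have dij : G.dist i j ≤ 2 := by
    rcases eq_or_ne i j with h | h
    · subst h; simp [SimpleGraph.dist_self]
    · exact le_of_eq (star_dist_leaves G c hstar hi hj h)
  have dik : G.dist i k ≤ 2 := by
    rcases eq_or_ne i k with h | h
    · subst h; simp [SimpleGraph.dist_self]
    · exact le_of_eq (star_dist_leaves G c hstar hi hk h)
  have hpp : max4Matrix G p p = 2 := by
    simp only [p, max4Matrix, max4Sym2, Sym2.lift₂_mk, max4, dci, dic, SimpleGraph.dist_self]
    norm_num
  have hpq : max4Matrix G p q = 3 := by
    have hd : G.dist i j = 2 ∨ G.dist i k = 2 := by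
      rcases eq_or_ne i j with h | h
      · right; subst h; exact star_dist_leaves G c hstar hi hk hjk
      · left; exact star_dist_leaves G c hstar hi hj h
    simp only [p, q, max4Matrix, max4Sym2, Sym2.lift₂_mk, max4, dci, dcj, dck, djk]
    have : max (1 + 2) (max (1 + G.dist i k) (1 + G.dist i j)) = 3 := by omega
    rw [this]; norm_num
  have hqp : max4Matrix G q p = 3 := by
    have hd : G.dist j i ≤ 2 := by rw [G.dist_comm]; exact dij
    have hd2 : G.dist k i ≤ 2 := by rw [G.dist_comm]; exact dik
    have djc : G.dist j c = 1 := by rw [G.dist_comm]; exact dcj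
    have dkc : G.dist k c = 1 := by rw [G.dist_comm]; exact dck
    simp only [p, q, max4Matrix, max4Sym2, Sym2.lift₂_mk, max4, dci, djc, dkc, djk]
    have : max (2 + 1) (max (1 + G.dist k i) (G.dist j i + 1)) = 3 := by omega
    rw [this]; norm_num
  have hqq : max4Matrix G q q = 4 := by
    have dkj : G.dist k j = 2 := by rw [G.dist_comm]; exact djk
    simp only [q, max4Matrix, max4Sym2, Sym2.lift₂_mk, max4, djk, dkj, SimpleGraph.dist_self]
    norm_num
  constructor
  · rw [LinearIndependent.pair_iff]
    intro s t hst
    have h1 := congrFun hst p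
    have h2 := congrFun hst q
    simp only [Pi.add_apply, Pi.smul_apply, Pi.zero_apply, smul_eq_mul, hpp, hpq, hqp, hqq] at h1 h2
    constructor <;> linarith
  · rw [Matrix.det_fin_two]
    simp only [Matrix.submatrix_apply, Matrix.cons_val_zero, Matrix.cons_val_one, Matrix.head_cons,
      hpp, hpq, hqp, hqq]
    norm_num
end

section
/- Let S_n be the star tree on n ≥ 3 vertices with central vertex c and leaf set L (so |L| = n−1). Then Max4PC_{S_n} has block form: the entry indexed by ({c,i},{c,j}) equals 2 for all leaves i, j; the entry indexed by ({c,i},{j,k}) equals 3 for all leaves i and all 2-subsets {j,k} of L; and the entry indexed by ({i,j},{k,l}) equals 4 for all 2-subsets {i,j}, {k,l} of L. -/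
open SimpleGraph

variable {V : Type*}

/-- Block form of the `Max4PC` matrix of the star tree on `n ≥ 3` vertices with
central vertex `c`: entries indexed by `({c,i},{c,j})` equal `2`, entries indexed by
`({c,i},{j,k})` equal `3`, and entries indexed by `({i,j},{k,l})` equal `4`, where
`i, j, k, l` range over leaves. -/
theorem star_max4_block_form {V : Type*} [Fintype V] [DecidableEq V]
    (G : SimpleGraph V) (c : V)
    (hstar : ∀ x y : V, G.Adj x y ↔ x ≠ y ∧ (x = c ∨ y = c))
    (hn : 3 ≤ Fintype.card V) :
    (∀ i j : V, i ≠ c → j ≠ c → max4Sym2 G s(c, i) s(c, j) = 2) ∧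
    (∀ i j k : V, i ≠ c → j ≠ c → k ≠ c → j ≠ k → max4Sym2 G s(c, i) s(j, k) = 3) ∧
    (∀ i j k l : V, i ≠ c → j ≠ c → k ≠ c → l ≠ c → i ≠ j → k ≠ l →
      max4Sym2 G s(i, j) s(k, l) = 4) := by
  have hd1 : ∀ x : V, x ≠ c → G.dist c x = 1 := by
    intro x hx
    rw [G.dist_eq_one_iff_adj, hstar]
    exact ⟨fun h => hx h.symm, Or.inl rfl⟩
  have hd1' : ∀ x : V, x ≠ c → G.dist x c = 1 := fun x hx => G.dist_comm ▸ hd1 x hx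
  have hd2 : ∀ x y : V, x ≠ c → y ≠ c → x ≠ y → G.dist x y = 2 := by
    intro x y hx hy hxy
    have a1 : G.Adj x c := (hstar x c).2 ⟨hx, Or.inr rfl⟩
    have a2 : G.Adj c y := (hstar c y).2 ⟨fun h => hy h.symm, Or.inl rfl⟩
    have hle : G.dist x y ≤ 2 := by
      have := G.dist_le (Walk.cons a1 (Walk.cons a2 Walk.nil))
      simpa using this
    have h0 : G.dist x y ≠ 0 := by
      intro h
      rw [G.dist_eq_zero_iff_eq_or_not_reachable] at h
      rcases h with h | h
      · exact hxy h
      · exact h ⟨Walk.cons a1 (Walk.cons a2 Walk.nil)⟩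
    have h1 : G.dist x y ≠ 1 := by
      intro h
      rw [G.dist_eq_one_iff_adj, hstar] at h
      rcases h with ⟨-, h | h⟩
      · exact hx h
      · exact hy h
    omega
  refine ⟨?_, ?_, ?_⟩
  · intro i j hi hj
    simp only [max4Sym2, Sym2.lift₂_mk, max4]
    rcases eq_or_ne i j with rfl | hij
    · simp [G.dist_self, hd1 i hi, hd1' i hi]
    · simp [G.dist_self, hd1 i hi, hd1 j hj, hd1' i hi, hd1' j hj, hd2 i j hi hj hij]
  · intro i j k hi hj hk hjk
    simp only [max4Sym2, Sym2.lift₂_mk, max4]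
    rw [hd1 i hi, hd2 j k hj hk hjk, hd1 j hj, hd1 k hk]
    rcases eq_or_ne i j with rfl | hij
    · simp [G.dist_self, hd2 i k hi hk hjk]
    rcases eq_or_ne i k with rfl | hik
    · simp [G.dist_self, hd2 i j hi hj hij]
    · simp [G.dist_self, hd2 i j hi hj hij, hd2 i k hi hk hik]
  · intro i j k l hi hj hk hl hij hkl
    simp only [max4Sym2, Sym2.lift₂_mk, max4]
    have d : ∀ x y : V, x ≠ c → y ≠ c → G.dist x y ≤ 2 := by
      intro x y hx hy
      rcases eq_or_ne x y with rfl | h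
      · rw [G.dist_self]; omega
      · exact le_of_eq (hd2 x y hx hy h)
    rw [hd2 i j hi hj hij, hd2 k l hk hl hkl]
    have := d i k hi hk; have := d j l hj hl; have := d i l hi hl; have := d j k hj hk
    omega
end

section
/- Let S_n be the star tree on n ≥ 3 vertices. The characteristic polynomial of Max4PC_{S_n} (as a real matrix) equals x^{binom(n,2) − 2} · (x² − 2(n−1)²·x − (n−1)·binom(n−1,2)). -/
open SimpleGraph

variable {V : Type*}

/-- The matrix `Max4PC_T` as a real matrix, with rows and columns indexed
by the 2-element subsets of the vertex set (non-diagonal elements of `Sym2 V`). -/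
noncomputable def max4MatrixR [Fintype V] [DecidableEq V] (G : SimpleGraph V) :
    Matrix {s : Sym2 V // ¬ s.IsDiag} {s : Sym2 V // ¬ s.IsDiag} ℝ :=
  fun p q => (max4Sym2 G p.1 q.1 : ℝ)

/-- Distances in a star graph. -/
lemma star_dist [DecidableEq V] (G : SimpleGraph V) (c : V)
    (hstar : ∀ x y : V, G.Adj x y ↔ x ≠ y ∧ (x = c ∨ y = c)) :
    ∀ a b : V, G.dist a b = if a = b then 0 else if a = c ∨ b = c then 1 else 2 := by
  intro a b
  by_cases hab : a = b
  · simp [hab]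
  · by_cases hc : a = c ∨ b = c
    · simp [hab, hc, SimpleGraph.dist_eq_one_iff_adj.mpr ((hstar a b).mpr ⟨hab, hc⟩)]
    · push_neg at hc
      have hac : G.Adj a c := (hstar a c).mpr ⟨hc.1, Or.inr rfl⟩
      have hcb : G.Adj c b := (hstar c b).mpr ⟨fun h => hc.2 h.symm, Or.inl rfl⟩
      have h2 : G.dist a b ≤ 2 := by
        simpa using SimpleGraph.dist_le (Walk.cons hac (Walk.cons hcb Walk.nil))
      have h0 : 0 < G.dist a b :=
        Reachable.pos_dist_of_ne (Walk.cons hac (Walk.cons hcb Walk.nil)).reachable hab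
      have h1 : G.dist a b ≠ 1 := fun h => by
        have := ((hstar a b).mp (SimpleGraph.dist_eq_one_iff_adj.mp h)).2
        tauto
      have hcc : ¬ (a = c ∨ b = c) := by tauto
      simp only [hab, hcc, if_false]
      omega

set_option maxHeartbeats 1000000 in
/-- The `max4` values in a star graph. -/
lemma star_max4 [DecidableEq V] (G : SimpleGraph V) (c : V)
    (hd : ∀ a b : V, G.dist a b = if a = b then 0 else if a = c ∨ b = c then 1 else 2)
    (w x y z : V) (hwx : w ≠ x) (hyz : y ≠ z) :
    max4 G w x y z = (if w = c ∨ x = c then 1 else 2) + (if y = c ∨ z = c then 1 else 2) := by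
  rcases eq_or_ne w c with hw | hw <;> rcases eq_or_ne x c with hx | hx <;>
    rcases eq_or_ne y c with hy | hy <;> rcases eq_or_ne z c with hz | hz <;>
    subst_vars <;> simp_all [max4, hd] <;> split_ifs <;> omega

/-- The `Max4PC` matrix of a star graph in rank-two form. -/
lemma star_matrix_form [Fintype V] [DecidableEq V] (G : SimpleGraph V) (c : V)
    (hd : ∀ a b : V, G.dist a b = if a = b then 0 else if a = c ∨ b = c then 1 else 2) :
    max4MatrixR G = Matrix.of (fun p q : {s : Sym2 V // ¬ s.IsDiag} =>
      (if c ∈ p.1 then (1:ℝ) else 2) + (if c ∈ q.1 then (1:ℝ) else 2)) := by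
  ext ⟨p, hp⟩ ⟨q, hq⟩
  induction p using Sym2.ind with
  | _ w x =>
  induction q using Sym2.ind with
  | _ y z =>
  rw [Sym2.mk_isDiag_iff] at hp hq
  have hrfl : max4Sym2 G s(w, x) s(y, z) = max4 G w x y z := rfl
  simp only [max4MatrixR, Matrix.of_apply, hrfl,
    star_max4 G c hd w x y z hp hq, Sym2.mem_iff]
  push_cast
  congr 1 <;> split_ifs <;> simp_all <;> tauto

/-- Counting the pairs that contain a fixed vertex. -/
lemma card_pairs_mem [Fintype V] [DecidableEq V] (c : V) :
    Fintype.card {p : {s : Sym2 V // ¬ s.IsDiag} // c ∈ p.1} = Fintype.card V - 1 := by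
  have e : {x : V // x ≠ c} ≃ {p : {s : Sym2 V // ¬ s.IsDiag} // c ∈ p.1} :=
    { toFun := fun x => ⟨⟨s(c, x.1), by simp [Sym2.mk_isDiag_iff, Ne.symm x.2]⟩, by simp⟩
      invFun := fun p => ⟨Sym2.Mem.other p.2, fun h => p.1.2 (by
        rw [← Sym2.other_spec p.2, h]; exact Sym2.mk_isDiag_iff.mpr rfl)⟩
      left_inv := fun x => Subtype.ext (Sym2.congr_right.mp (Sym2.other_spec _))
      right_inv := fun p => Subtype.ext (Subtype.ext (Sym2.other_spec p.2)) }
  rw [← Fintype.card_congr e]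
  simp [Fintype.card_subtype_compl]

/-- Determinant of `x·1 − (rank ≤ 2 matrix of the form b_p + b_q)`. -/
lemma det_rank_two {K : Type*} [Field K] {I : Type*} [Fintype I] [DecidableEq I]
    (x : K) (hx : x ≠ 0) (b : I → K) (h2 : 2 ≤ Fintype.card I) :
    (Matrix.diagonal (fun _ : I => x) - Matrix.of (fun p q => b p + b q)).det =
      x ^ (Fintype.card I - 2) *
        (x ^ 2 - 2 * (∑ p, b p) * x +
          ((∑ p, b p) ^ 2 - (Fintype.card I : K) * ∑ p, (b p) ^ 2)) := by
  set N := Fintype.card I with hN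
  set Cm : Matrix I (Fin 2) K := Matrix.of (fun p i => if i = 0 then b p else 1) with hCm
  set Dm : Matrix (Fin 2) I K := Matrix.of (fun i q => if i = 0 then 1 else b q) with hDm
  have hCD : Cm * Dm = Matrix.of (fun p q => b p + b q) := by
    ext p q
    simp [Matrix.mul_apply, Fin.sum_univ_two, hCm, hDm]
  have key : Matrix.diagonal (fun _ : I => x) - Cm * Dm
      = x • (1 + ((-x⁻¹) • Cm) * Dm) := by
    rw [Matrix.smul_mul, smul_add, smul_smul, Matrix.smul_one_eq_diagonal]
    rw [mul_neg, mul_inv_cancel₀ hx, neg_smul, one_smul, sub_eq_add_neg]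
  rw [← hCD, key, Matrix.det_smul, Matrix.det_one_add_mul_comm]
  have hDC00 : (Dm * ((-x⁻¹) • Cm)) 0 0 = -x⁻¹ * ∑ p, b p := by
    simp [Matrix.mul_apply, hCm, hDm, Finset.mul_sum]
  have hDC01 : (Dm * ((-x⁻¹) • Cm)) 0 1 = -x⁻¹ * (N : K) := by
    simp [Matrix.mul_apply, hCm, hDm, Matrix.smul_apply, Finset.sum_const, Finset.card_univ,
      nsmul_eq_mul, hN]
    ring
  have hDC10 : (Dm * ((-x⁻¹) • Cm)) 1 0 = -x⁻¹ * ∑ p, (b p) ^ 2 := by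
    simp [Matrix.mul_apply, hCm, hDm, Finset.mul_sum, sq]
    exact Finset.sum_congr rfl fun _ _ => by ring
  have hDC11 : (Dm * ((-x⁻¹) • Cm)) 1 1 = -x⁻¹ * ∑ p, b p := by
    simp [Matrix.mul_apply, hCm, hDm, Finset.mul_sum]
    exact Finset.sum_congr rfl fun _ _ => by ring
  rw [Matrix.det_fin_two]
  simp only [Matrix.add_apply, Matrix.one_apply_eq, Matrix.one_apply_ne (by decide : (0:Fin 2) ≠ 1),
    Matrix.one_apply_ne (by decide : (1:Fin 2) ≠ 0), hDC00, hDC01, hDC10, hDC11]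
  have hpow : x ^ N = x ^ (N - 2) * x ^ 2 := by
    rw [← pow_add]
    congr 1
    omega
  rw [hpow]
  field_simp
  ring

lemma two_mul_choose_two (j : ℕ) : 2 * j.choose 2 = j * (j - 1) := by
  rw [Nat.choose_two_right]
  refine Nat.mul_div_cancel' ?_
  rcases j with _ | s
  · simp
  · simpa [mul_comm] using (Nat.even_mul_succ_self s).two_dvd

lemma nsplit (j : ℕ) (h : 3 ≤ j) : j * (j - 1) = 2 * (j - 1) + (j - 1) * (j - 1 - 1) := by
  obtain ⟨t, rfl⟩ : ∃ t, j = t + 3 := ⟨j - 3, by omega⟩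
  simp only [show t + 3 - 1 = t + 2 from rfl, show t + 2 - 1 = t + 1 from rfl]
  ring

/-- The characteristic polynomial of the `Max4PC` matrix of the star tree on
`n ≥ 3` vertices equals `X^(C(n,2) - 2) * (X² - 2(n-1)²·X - (n-1)·C(n-1,2))`. -/
theorem charpoly_max4Matrix_star {V : Type*} [Fintype V] [DecidableEq V]
    (G : SimpleGraph V) (c : V)
    (hstar : ∀ x y : V, G.Adj x y ↔ x ≠ y ∧ (x = c ∨ y = c))
    (hn : 3 ≤ Fintype.card V) :
    (max4MatrixR G).charpoly =
      Polynomial.X ^ (Nat.choose (Fintype.card V) 2 - 2) *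
        (Polynomial.X ^ 2 -
          Polynomial.C (2 * ((Fintype.card V : ℝ) - 1) ^ 2) * Polynomial.X -
          Polynomial.C (((Fintype.card V : ℝ) - 1) *
            (Nat.choose (Fintype.card V - 1) 2 : ℝ))) := by
  classical
  have hd := star_dist G c hstar
  set n := Fintype.card V with hndef
  -- counting
  have hNI : Fintype.card {s : Sym2 V // ¬ s.IsDiag} = n.choose 2 := Sym2.card_subtype_not_diag
  set m := (Finset.univ.filter fun p : {s : Sym2 V // ¬ s.IsDiag} => c ∈ p.1).card with hmdef
  set k := (Finset.univ.filter fun p : {s : Sym2 V // ¬ s.IsDiag} => ¬ c ∈ p.1).card with hkdef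
  have hmval : m = n - 1 := by
    rw [hmdef, ← Fintype.card_subtype]
    exact card_pairs_mem c
  have hmk : m + k = n.choose 2 := by
    rw [hmdef, hkdef, ← hNI, ← Finset.card_univ]
    exact Finset.card_filter_add_card_filter_not _
  have e1 := two_mul_choose_two n
  have e2 := two_mul_choose_two (n - 1)
  have hsplit := nsplit n hn
  have hkval : k = (n - 1).choose 2 := by omega
  -- cast facts
  have hm' : (m : ℝ) = (n : ℝ) - 1 := by
    rw [hmval]
    push_cast [Nat.cast_sub (by omega : 1 ≤ n)]
    ring
  have h2k : 2 * (k : ℝ) = ((n : ℝ) - 1) * ((n : ℝ) - 2) := by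
    have hk2 : 2 * k = (n - 1) * (n - 1 - 1) := by omega
    have := congrArg (fun t : ℕ => (t : ℝ)) hk2
    push_cast [Nat.cast_sub (by omega : 1 ≤ n), Nat.cast_sub (by omega : 1 ≤ n - 1)] at this
    rw [this]
    have : ((n : ℝ) - 1 - 1) = (n : ℝ) - 2 := by ring
    rw [this]
  have hkc : ((n - 1).choose 2 : ℝ) = (k : ℝ) := by rw [hkval]
  have hmkc : ((n.choose 2 : ℕ) : ℝ) = (m : ℝ) + (k : ℝ) := by
    rw [← hmk]; push_cast; ring
  -- the algebra map to rational functions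
  set f := algebraMap (Polynomial ℝ) (RatFunc ℝ) with hf
  have hfinj : Function.Injective f := RatFunc.algebraMap_injective ℝ
  set g : ℝ →+* RatFunc ℝ := f.comp Polynomial.C with hg
  have hX : f Polynomial.X ≠ 0 := fun h => Polynomial.X_ne_zero (hfinj (by simpa using h))
  have h2I : 2 ≤ Fintype.card {s : Sym2 V // ¬ s.IsDiag} := by
    rw [hNI]
    have : Nat.choose 3 2 ≤ n.choose 2 := Nat.choose_le_choose 2 hn
    omega
  apply hfinj
  rw [star_matrix_form G c hd, Matrix.charpoly, RingHom.map_det, RingHom.mapMatrix_apply]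
  have hmap : (Matrix.charmatrix (Matrix.of (fun p q : {s : Sym2 V // ¬ s.IsDiag} =>
        (if c ∈ p.1 then (1:ℝ) else 2) + (if c ∈ q.1 then (1:ℝ) else 2)))).map f =
      Matrix.diagonal (fun _ : {s : Sym2 V // ¬ s.IsDiag} => f Polynomial.X) -
        Matrix.of (fun p q : {s : Sym2 V // ¬ s.IsDiag} =>
          (fun r : {s : Sym2 V // ¬ s.IsDiag} => g (if c ∈ r.1 then (1:ℝ) else 2)) p +
          (fun r : {s : Sym2 V // ¬ s.IsDiag} => g (if c ∈ r.1 then (1:ℝ) else 2)) q) := by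
    ext p q
    by_cases hpq : p = q <;>
      simp [Matrix.charmatrix_apply, Matrix.map_apply, Matrix.sub_apply, Matrix.diagonal_apply,
        Matrix.of_apply, hpq, map_sub, map_add, hg]
  rw [hmap, det_rank_two (f Polynomial.X) hX _ h2I]
  -- compute the sums
  have hS1 : (∑ p : {s : Sym2 V // ¬ s.IsDiag},
      g (if c ∈ p.1 then (1:ℝ) else 2)) = g ((m : ℝ) + 2 * (k : ℝ)) := by
    rw [← map_sum]
    congr 1
    rw [Finset.sum_ite, Finset.sum_const, Finset.sum_const, ← hmdef, ← hkdef]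
    simp [nsmul_eq_mul]
    ring
  have hS2 : (∑ p : {s : Sym2 V // ¬ s.IsDiag},
      (g (if c ∈ p.1 then (1:ℝ) else 2)) ^ 2) = g ((m : ℝ) + 4 * (k : ℝ)) := by
    have hsq : ∀ p : {s : Sym2 V // ¬ s.IsDiag},
        (g (if c ∈ p.1 then (1:ℝ) else 2)) ^ 2 = g (if c ∈ p.1 then (1:ℝ) else 4) := by
      intro p
      rw [← map_pow]
      congr 1
      split_ifs <;> norm_num
    simp_rw [hsq]
    rw [← map_sum]
    congr 1
    rw [Finset.sum_ite, Finset.sum_const, Finset.sum_const, ← hmdef, ← hkdef]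
    simp [nsmul_eq_mul]
    ring
  rw [hS1, hS2, hNI]
  -- the right-hand side
  rw [map_mul, map_pow, map_sub, map_sub, map_mul, map_pow]
  have hfC : ∀ r : ℝ, f (Polynomial.C r) = g r := fun r => rfl
  rw [hfC, hfC]
  -- match the two factors
  congr 1
  have key1 : 2 * g ((m : ℝ) + 2 * (k : ℝ)) = g (2 * ((n : ℝ) - 1) ^ 2) := by
    rw [show (2 : RatFunc ℝ) = g 2 from (map_ofNat g 2).symm, ← map_mul]
    congr 1
    have hr : 2 * (((n:ℝ) - 1) + ((n:ℝ) - 1) * ((n:ℝ) - 2)) = 2 * ((n:ℝ) - 1) ^ 2 := by ring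
    nlinarith [h2k, hm', hr]
  have key2 : g ((m : ℝ) + 2 * (k : ℝ)) ^ 2 -
      ((n.choose 2 : ℕ) : RatFunc ℝ) * g ((m : ℝ) + 4 * (k : ℝ)) =
      - g (((n : ℝ) - 1) * ((n - 1).choose 2 : ℝ)) := by
    rw [← map_pow, show ((n.choose 2 : ℕ) : RatFunc ℝ) = g ((n.choose 2 : ℕ) : ℝ) from
      (map_natCast g _).symm, ← map_mul, ← map_sub, ← map_neg]
    congr 1
    rw [hmkc, hkc, hm']
    ring
  rw [key1, key2]
  ring
end
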